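/- Let t = 1 − n(b−c)/((n−1)·b) ∈ (0,1). There exists δ₀ ∈ (0,1) such that for all δ ∈ (δ₀,1): for every k ∈ {1,…,n−1} the set B_k(δ) = {ε ∈ (0,1) : Δ(ε;k,δ) > t} is a nonempty open interval (ε̲_k, ε̄_k), and the endpoints satisfy 0 = ε̲_{n−1} < ε̲_{n−2} < ⋯ < ε̲_1 and 0 < ε̄_{n−1} < ε̄_{n−2} < ⋯ < ε̄_1 < 1. That is, both endpoints of the band of mistake rates supporting the stability of the conditional cooperative strategy T_k strictly increase as its tolerance increases (as k decreases), and the lower endpoint is 0 only for the least tolerant strategy T_{n−1}. -/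

import Mathlib

/-!
Write `N = n - 1` and `m = n - k - 1`, and let `S_m = ∑_{q<m} ψ(N,q,·)` be the lower binomial
tail. Because `1 - δ S_m > 0`, `Δ(ε;k,δ) > t` is equivalent to `t (1 - δ) < δ G_m(ε)` with the
margin `G_m(ε) = (1 - ε) ψ(N,m,ε) - t (1 - S_m(ε))`, so `B_k(δ)` is a superlevel set of `G_m`.

Since `G_m' = C(N,m) ε^(m-1) (1-ε)^(N-m) ((1-t) m - (N+1) ε)`, the margin rises up to
`(1-t) m / (N+1)` and falls afterwards, so every band is an open interval. The identity
`G_m - G_{m+1} = C(N+1,m+1) ε^m (1-ε)^(N-m) (ε*_m - ε)` with `ε*_m = (1-t)(m+1)/(N+1)` says that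
consecutive margins cross exactly once, at `ε*_m`. Summing it from `m` up to `G_{N+1} = 0`, and
using that `ε*_q` increases with `q`, gives `G_m(ε*_m) > 0`; hence for `δ` close to `1` the point
`ε*_m` lies in the bands of both `m` and `m + 1`. Left of `ε*_m` we have `G_m > G_{m+1}`, so the
lower endpoint of band `m + 1` already lies in band `m`; right of `ε*_m` we have
`G_{m+1} > G_m`, so the upper endpoint of band `m` lies in band `m + 1`. Finally
`G_0 = (1-ε)^n - t` is decreasing, so band `0` starts at `0`, whereas `G_m(0) = 0` for `m ≥ 1` and
`G_m(1) = -t` keep all other endpoints inside `(0,1)`.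
-/

open Finset

/-- `ψ(j,q,ε) = (j choose q)·ε^q·(1−ε)^(j−q)`. -/
noncomputable def psi (j q : ℕ) (ε : ℝ) : ℝ :=
  (j.choose q : ℝ) * ε ^ q * (1 - ε) ^ (j - q)

/-- The continuation factor `Δ(ε;k,δ)`. -/
noncomputable def Delta (n k : ℕ) (ε δ : ℝ) : ℝ :=
  δ * (1 - ε) * psi (n - 1) (n - k - 1) ε /
    (1 - δ * ∑ q ∈ range (n - k - 1), psi (n - 1) q ε)

noncomputable def lowerTail (N m : ℕ) (x : ℝ) : ℝ := ∑ q ∈ range m, psi N q x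

noncomputable def margin (N m : ℕ) (t x : ℝ) : ℝ :=
  (1 - x) * psi N m x - t * (1 - lowerTail N m x)

noncomputable def crossing (N m : ℕ) (t : ℝ) : ℝ := (1 - t) * (m + 1) / (N + 1)

noncomputable def peak (N m : ℕ) (t : ℝ) : ℝ := (1 - t) * m / (N + 1)

def band (N m : ℕ) (t δ : ℝ) : Set ℝ :=
  {ε | ε ∈ Set.Ioo 0 1 ∧ t * (1 - δ) < δ * margin N m t ε}

theorem IsOpen.eq_Ioo_csInf_csSup {α : Type*} [ConditionallyCompleteLinearOrder α]
    [TopologicalSpace α] [OrderTopology α] [DenselyOrdered α] [NoMinOrder α] [NoMaxOrder α]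
    {s : Set α} (ho : IsOpen s) (hc : s.OrdConnected) (hne : s.Nonempty) (hb : BddBelow s)
    (ha : BddAbove s) : s = Set.Ioo (sInf s) (sSup s) := by
  refine subset_antisymm ?_ (IsConnected.Ioo_csInf_csSup_subset ⟨hne, hc.isPreconnected⟩ hb ha)
  simpa [ho.interior_eq] using interior_mono (subset_Icc_csInf_csSup hb ha)

lemma derivative_sum_range_succ_bernsteinPolynomial (R : Type*) [CommRing R] (N m : ℕ) :
    Polynomial.derivative (∑ q ∈ range (m + 1), bernsteinPolynomial R N q) =
      -(N * bernsteinPolynomial R (N - 1) m) := by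
  induction m with
  | zero => simp [bernsteinPolynomial.derivative_zero]
  | succ m ih =>
    rw [sum_range_succ, Polynomial.derivative_add, ih, bernsteinPolynomial.derivative_succ]
    ring

section

variable {N m : ℕ} {t δ x : ℝ}

lemma psi_eq_eval (N q : ℕ) (x : ℝ) : psi N q x = (bernsteinPolynomial ℝ N q).eval x := by
  simp [psi, bernsteinPolynomial]

lemma psi_nonneg (q : ℕ) (hx0 : 0 ≤ x) (hx1 : x ≤ 1) : 0 ≤ psi N q x := by
  have : 0 ≤ 1 - x := by linarith
  unfold psi; positivity

lemma lowerTail_succ (N m : ℕ) (x : ℝ) :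
    lowerTail N (m + 1) x = lowerTail N m x + psi N m x :=
  sum_range_succ _ _

lemma lowerTail_nonneg (hx0 : 0 ≤ x) (hx1 : x ≤ 1) : 0 ≤ lowerTail N m x :=
  sum_nonneg fun q _ => psi_nonneg q hx0 hx1

lemma lowerTail_self_add_one (N : ℕ) (x : ℝ) : lowerTail N (N + 1) x = 1 := by
  simp only [lowerTail, psi_eq_eval, ← Polynomial.eval_finsetSum, bernsteinPolynomial.sum,
    Polynomial.eval_one]

lemma lowerTail_le_one (hm : m ≤ N + 1) (hx0 : 0 ≤ x) (hx1 : x ≤ 1) : lowerTail N m x ≤ 1 :=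
  lowerTail_self_add_one N x ▸ sum_le_sum_of_subset_of_nonneg (range_mono hm)
    fun q _ _ => psi_nonneg q hx0 hx1

lemma margin_zero (hm : 0 < m) : margin N m t 0 = 0 := by
  obtain ⟨m, rfl⟩ := Nat.exists_eq_add_of_lt hm
  simp [margin, lowerTail, psi, sum_range_succ']

lemma margin_one (hm : m ≤ N) : margin N m t 1 = -t := by
  have : lowerTail N m 1 = 0 := sum_eq_zero fun q hq => by
    simp [psi, Nat.sub_ne_zero_of_lt ((mem_range.mp hq).trans_le hm)]
  simp [margin, this]

lemma margin_self_add_one (N : ℕ) (t x : ℝ) : margin N (N + 1) t x = 0 := by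
  simp [margin, psi, lowerTail_self_add_one]

lemma one_sub_mul_psi_succ (N m : ℕ) (x : ℝ) :
    (1 - x) * psi N (m + 1) x = N.choose (m + 1) * x * (x ^ m * (1 - x) ^ (N - m)) := by
  rcases lt_or_ge m N with hm | hm
  · obtain ⟨r, rfl⟩ := Nat.exists_eq_add_of_lt hm
    simp only [psi, show m + r + 1 - (m + 1) = r by omega, show m + r + 1 - m = r + 1 by omega]
    ring
  · simp [psi, Nat.choose_eq_zero_of_lt (Nat.lt_succ_of_le hm)]

lemma margin_sub_margin_succ (N m : ℕ) (t x : ℝ) :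
    margin N m t x - margin N (m + 1) t x =
      (N + 1).choose (m + 1) * (x ^ m * (1 - x) ^ (N - m)) * (crossing N m t - x) := by
  have hsum : ((N + 1).choose (m + 1) : ℝ) = N.choose m + N.choose (m + 1) := by
    exact_mod_cast Nat.choose_succ_succ N m
  have hmul : ((N + 1).choose (m + 1) : ℝ) * (m + 1) = (N + 1) * N.choose m := by
    exact_mod_cast (Nat.add_one_mul_choose_eq N m).symm
  have hexp : margin N m t x - margin N (m + 1) t x =
      (1 - x - t) * psi N m x - (1 - x) * psi N (m + 1) x := by
    simp only [margin, lowerTail_succ]; ring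
  rw [hexp, one_sub_mul_psi_succ, crossing]
  simp only [psi]
  field_simp
  linear_combination (-(1 - t) * (x ^ m * (1 - x) ^ (N - m))) * hmul +
    (x * (N + 1) * (x ^ m * (1 - x) ^ (N - m))) * hsum

lemma crossing_pos (ht : t < 1) : 0 < crossing N m t := by
  unfold crossing
  have : 0 < 1 - t := by linarith
  positivity

lemma crossing_lt_one (hm : m ≤ N) (ht : 0 < t) : crossing N m t < 1 := by
  have hmN : (m : ℝ) + 1 ≤ N + 1 := by exact_mod_cast Nat.succ_le_succ hm
  rw [crossing, div_lt_one (by positivity)]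
  nlinarith

lemma crossing_lt_crossing_succ (ht : t < 1) : crossing N m t < crossing N (m + 1) t := by
  unfold crossing
  have : 0 < 1 - t := by linarith
  push_cast
  gcongr
  linarith

lemma margin_succ_crossing (N m : ℕ) (t : ℝ) :
    margin N (m + 1) t (crossing N m t) = margin N m t (crossing N m t) := by
  linarith [margin_sub_margin_succ N m t (crossing N m t)]

lemma choose_mul_pow_mul_pow_pos (hm : m ≤ N) (hx0 : 0 < x) (hx1 : x < 1) :
    0 < ((N + 1).choose (m + 1) : ℝ) * (x ^ m * (1 - x) ^ (N - m)) := by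
  have : 0 < ((N + 1).choose (m + 1) : ℝ) := by exact_mod_cast Nat.choose_pos (by omega)
  have : 0 < 1 - x := by linarith
  positivity

lemma margin_succ_lt_margin (hm : m ≤ N) (hx0 : 0 < x) (hx1 : x < 1)
    (hx : x < crossing N m t) : margin N (m + 1) t x < margin N m t x := by
  linarith [margin_sub_margin_succ N m t x,
    mul_pos (choose_mul_pow_mul_pow_pos hm hx0 hx1) (sub_pos.2 hx)]

lemma margin_lt_margin_succ (hm : m ≤ N) (hx0 : 0 < x) (hx1 : x < 1)
    (hx : crossing N m t < x) : margin N m t x < margin N (m + 1) t x := by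
  linarith [margin_sub_margin_succ N m t x,
    mul_pos (choose_mul_pow_mul_pow_pos hm hx0 hx1) (sub_pos.2 hx)]

lemma margin_pos_of_lt_crossing (hm : m ≤ N) (ht : t < 1) (hx0 : 0 < x) (hx1 : x < 1)
    (hx : x < crossing N m t) : 0 < margin N m t x := by
  obtain ⟨r, hr⟩ := Nat.exists_eq_add_of_le hm
  induction r generalizing m with
  | zero =>
    subst hr
    exact margin_self_add_one _ t x ▸ margin_succ_lt_margin le_rfl hx0 hx1 hx
  | succ r ih =>
    exact (ih (by omega) (hx.trans (crossing_lt_crossing_succ ht)) (by omega)).trans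
      (margin_succ_lt_margin hm hx0 hx1 hx)

lemma margin_crossing_pos (hm : m < N) (ht0 : 0 < t) (ht1 : t < 1) :
    0 < margin N m t (crossing N m t) :=
  margin_succ_crossing N m t ▸ margin_pos_of_lt_crossing hm ht1 (crossing_pos ht1)
    (crossing_lt_one hm.le ht0) (crossing_lt_crossing_succ ht1)

lemma hasDerivAt_lowerTail_succ (N m : ℕ) (x : ℝ) :
    HasDerivAt (lowerTail N (m + 1)) (-(N * psi (N - 1) m x)) x := by
  have h : lowerTail N (m + 1) =
      fun x => (∑ q ∈ range (m + 1), bernsteinPolynomial ℝ N q).eval x := by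
    ext x; simp [lowerTail, psi_eq_eval, Polynomial.eval_finsetSum]
  rw [h]
  refine (Polynomial.hasDerivAt _ x).congr_deriv ?_
  rw [derivative_sum_range_succ_bernsteinPolynomial]
  simp [psi_eq_eval]

lemma hasDerivAt_margin_succ (hm : m + 1 ≤ N) (x : ℝ) :
    HasDerivAt (margin N (m + 1) t)
      (N.choose (m + 1) * (x ^ m * (1 - x) ^ (N - (m + 1))) *
        ((1 - t) * (m + 1) - (N + 1) * x)) x := by
  obtain ⟨r, rfl⟩ := Nat.exists_eq_add_of_le hm
  have hchoose :
      ((m + 1 + r : ℕ) : ℝ) * (m + r).choose m = (m + 1 + r).choose (m + 1) * (m + 1) := by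
    exact_mod_cast (show m + 1 + r = m + r + 1 by omega) ▸ Nat.add_one_mul_choose_eq (m + r) m
  have hfun : margin (m + 1 + r) (m + 1) t =
      fun x => (m + 1 + r).choose (m + 1) * (x ^ (m + 1) * (1 - x) ^ (r + 1)) -
        t * (1 - lowerTail (m + 1 + r) (m + 1) x) := by
    ext x
    simp only [margin, psi, show m + 1 + r - (m + 1) = r by omega]
    ring
  rw [hfun]
  refine ((((hasDerivAt_pow (m + 1) x).mul
    (((hasDerivAt_id' x).const_sub 1).pow (r + 1))).const_mul ((m + 1 + r).choose (m + 1) : ℝ)).sub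
    (((hasDerivAt_lowerTail_succ (m + 1 + r) m x).const_sub 1).const_mul t)).congr_deriv ?_
  simp only [psi, show m + 1 + r - 1 = m + r by omega, show m + r - m = r by omega,
    show m + 1 + r - (m + 1) = r by omega, Nat.add_sub_cancel, Pi.pow_apply]
  push_cast at hchoose ⊢
  linear_combination (-(t * x ^ m * (1 - x) ^ r)) * hchoose

lemma continuous_margin (N m : ℕ) (t : ℝ) : Continuous (margin N m t) := by
  unfold margin lowerTail psi
  fun_prop

lemma monotoneOn_margin (hm : m ≤ N) (ht : 0 ≤ t) :
    MonotoneOn (margin N m t) (Set.Icc 0 (peak N m t)) := by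
  rcases m with _ | m
  · simp [peak, Set.subsingleton_singleton.monotoneOn]
  refine monotoneOn_of_hasDerivWithinAt_nonneg (convex_Icc _ _)
    (continuous_margin N _ t).continuousOn
    (fun x _ => (hasDerivAt_margin_succ hm x).hasDerivWithinAt) fun x hx => ?_
  rw [interior_Icc, Set.mem_Ioo, peak, lt_div_iff₀ (by positivity)] at hx
  obtain ⟨hx0, hxp⟩ := hx
  push_cast at hxp
  have : ((m : ℝ) + 1) ≤ N := by exact_mod_cast hm
  have : 0 ≤ 1 - x := by nlinarith
  exact mul_nonneg (by positivity) (by linarith)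

lemma antitoneOn_margin (hm : m ≤ N) (ht : t ≤ 1) :
    AntitoneOn (margin N m t) (Set.Icc (peak N m t) 1) := by
  rcases m with _ | m
  · intro x hx y hy hxy
    simp only [peak, CharP.cast_eq_zero, mul_zero, zero_div] at hx hy
    simp only [margin, lowerTail, psi, range_zero, sum_empty, Nat.choose_zero_right, Nat.cast_one,
      pow_zero, one_mul, Nat.sub_zero]
    have : 0 ≤ 1 - y := by linarith [hy.2]
    gcongr
    linarith [hx.2]
  refine antitoneOn_of_hasDerivWithinAt_nonpos (convex_Icc _ _)
    (continuous_margin N _ t).continuousOn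
    (fun x _ => (hasDerivAt_margin_succ hm x).hasDerivWithinAt) fun x hx => ?_
  rw [interior_Icc, Set.mem_Ioo, peak, div_lt_iff₀ (by positivity)] at hx
  push_cast at hx
  have : 0 ≤ x := by nlinarith
  have : 0 ≤ 1 - x := by linarith
  exact mul_nonpos_of_nonneg_of_nonpos (by positivity) (by linarith)

lemma isOpen_band : IsOpen (band N m t δ) :=
  isOpen_Ioo.inter (isOpen_lt continuous_const (continuous_const.mul (continuous_margin N m t)))

lemma bddBelow_band : BddBelow (band N m t δ) := ⟨0, fun _ h => h.1.1.le⟩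

lemma bddAbove_band : BddAbove (band N m t δ) := ⟨1, fun _ h => h.1.2.le⟩

lemma ordConnected_band (hm : m ≤ N) (ht0 : 0 ≤ t) (ht1 : t ≤ 1) (hδ : 0 ≤ δ) :
    (band N m t δ).OrdConnected := by
  refine ⟨fun x hx z hz y hy => ⟨⟨hx.1.1.trans_le hy.1, hy.2.trans_lt hz.1.2⟩, ?_⟩⟩
  rcases le_total y (peak N m t) with hyp | hyp
  · refine hx.2.trans_le (mul_le_mul_of_nonneg_left ?_ hδ)
    exact monotoneOn_margin hm ht0 ⟨hx.1.1.le, hy.1.trans hyp⟩ ⟨hx.1.1.le.trans hy.1, hyp⟩ hy.1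
  · refine hz.2.trans_le (mul_le_mul_of_nonneg_left ?_ hδ)
    exact antitoneOn_margin hm ht1 ⟨hyp, hy.2.trans hz.1.2.le⟩ ⟨hyp.trans hy.2, hz.1.2.le⟩ hy.2

lemma band_eq_Ioo (hm : m ≤ N) (ht0 : 0 ≤ t) (ht1 : t ≤ 1) (hδ : 0 ≤ δ)
    (hne : (band N m t δ).Nonempty) :
    band N m t δ = Set.Ioo (sInf (band N m t δ)) (sSup (band N m t δ)) :=
  isOpen_band.eq_Ioo_csInf_csSup (ordConnected_band hm ht0 ht1 hδ) hne bddBelow_band bddAbove_band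

lemma le_margin_of_mem_closure_band (hx : x ∈ closure (band N m t δ)) :
    t * (1 - δ) ≤ δ * margin N m t x :=
  closure_minimal (fun _ hy => hy.2.le)
    (isClosed_le continuous_const (continuous_const.mul (continuous_margin N m t))) hx

lemma sInf_band_pos (hm : 0 < m) (ht : 0 < t) (hδ : δ < 1) (hne : (band N m t δ).Nonempty) :
    0 < sInf (band N m t δ) := by
  refine (le_csInf hne fun _ hy => hy.1.1.le).lt_of_ne fun h => ?_
  have := le_margin_of_mem_closure_band (h ▸ csInf_mem_closure hne bddBelow_band)
  rw [margin_zero hm, mul_zero] at this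
  nlinarith

lemma sSup_band_lt_one (hm : m ≤ N) (ht : 0 < t) (hne : (band N m t δ).Nonempty) :
    sSup (band N m t δ) < 1 := by
  refine (csSup_le hne fun _ hy => hy.1.2.le).lt_of_ne fun h => ?_
  have := le_margin_of_mem_closure_band (h ▸ csSup_mem_closure hne bddAbove_band)
  rw [margin_one hm] at this
  linarith

lemma crossing_mem_band (hm : m < N) (ht0 : 0 < t) (ht1 : t < 1)
    (hc : t * (1 - δ) < δ * margin N m t (crossing N m t)) : crossing N m t ∈ band N m t δ :=
  ⟨⟨crossing_pos ht1, crossing_lt_one hm.le ht0⟩, hc⟩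

lemma crossing_mem_band_succ (hm : m < N) (ht0 : 0 < t) (ht1 : t < 1)
    (hc : t * (1 - δ) < δ * margin N m t (crossing N m t)) :
    crossing N m t ∈ band N (m + 1) t δ :=
  ⟨(crossing_mem_band hm ht0 ht1 hc).1, margin_succ_crossing N m t ▸ hc⟩

lemma sInf_band_eq_zero (hN : 0 < N) (ht0 : 0 < t) (ht1 : t < 1) (hδ0 : 0 < δ)
    (hc : t * (1 - δ) < δ * margin N 0 t (crossing N 0 t)) : sInf (band N 0 t δ) = 0 := by
  have hmem := crossing_mem_band hN ht0 ht1 hc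
  have hB := band_eq_Ioo (Nat.zero_le N) ht0.le ht1.le hδ0.le ⟨_, hmem⟩
  refine le_antisymm (not_lt.1 fun hpos => ?_) (le_csInf ⟨_, hmem⟩ fun _ hy => hy.1.1.le)
  set x := sInf (band N 0 t δ)
  have hxc : x < crossing N 0 t := (hB ▸ hmem).1
  have hpeak : peak N 0 t = 0 := by simp [peak]
  have hx : x ∈ band N 0 t δ := by
    refine ⟨⟨hpos, hxc.trans hmem.1.2⟩, hc.trans_le (mul_le_mul_of_nonneg_left ?_ hδ0.le)⟩
    exact antitoneOn_margin (Nat.zero_le N) ht1.le ⟨hpeak ▸ hpos.le, (hxc.trans hmem.1.2).le⟩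
      ⟨hpeak ▸ (crossing_pos ht1).le, hmem.1.2.le⟩ hxc.le
  exact (hB ▸ hx).1.false

lemma sInf_band_lt_sInf_band_succ (hm : m + 1 < N) (ht0 : 0 < t) (ht1 : t < 1) (hδ0 : 0 < δ)
    (hδ1 : δ < 1) (hc : t * (1 - δ) < δ * margin N m t (crossing N m t)) :
    sInf (band N m t δ) < sInf (band N (m + 1) t δ) := by
  have hmem := crossing_mem_band_succ (hm.trans' m.lt_succ_self) ht0 ht1 hc
  have hB := band_eq_Ioo hm.le ht0.le ht1.le hδ0.le ⟨_, hmem⟩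
  set x := sInf (band N (m + 1) t δ)
  have hx0 : 0 < x := sInf_band_pos m.succ_pos ht0 hδ1 ⟨_, hmem⟩
  have hxc : x < crossing N m t := (hB ▸ hmem).1
  have hx1 : x < 1 := hxc.trans hmem.1.2
  have hx : x ∈ band N m t δ :=
    ⟨⟨hx0, hx1⟩,
      (le_margin_of_mem_closure_band (csInf_mem_closure ⟨_, hmem⟩ bddBelow_band)).trans_lt
        (mul_lt_mul_of_pos_left (margin_succ_lt_margin (by omega) hx0 hx1 hxc) hδ0)⟩
  exact (band_eq_Ioo (by omega) ht0.le ht1.le hδ0.le ⟨_, hx⟩ ▸ hx).1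

lemma sSup_band_lt_sSup_band_succ (hm : m + 1 < N) (ht0 : 0 < t) (ht1 : t < 1) (hδ0 : 0 < δ)
    (hc : t * (1 - δ) < δ * margin N m t (crossing N m t)) :
    sSup (band N m t δ) < sSup (band N (m + 1) t δ) := by
  have hmem := crossing_mem_band (hm.trans' m.lt_succ_self) ht0 ht1 hc
  have hB := band_eq_Ioo (by omega) ht0.le ht1.le hδ0.le ⟨_, hmem⟩
  set x := sSup (band N m t δ)
  have hxc : crossing N m t < x := (hB ▸ hmem).2
  have hx0 : 0 < x := (crossing_pos ht1).trans hxc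
  have hx1 : x < 1 := sSup_band_lt_one (by omega) ht0 ⟨_, hmem⟩
  have hx : x ∈ band N (m + 1) t δ :=
    ⟨⟨hx0, hx1⟩,
      (le_margin_of_mem_closure_band (csSup_mem_closure ⟨_, hmem⟩ bddAbove_band)).trans_lt
        (mul_lt_mul_of_pos_left (margin_lt_margin_succ (by omega) hx0 hx1 hxc) hδ0)⟩
  exact (band_eq_Ioo hm.le ht0.le ht1.le hδ0.le ⟨_, hx⟩ ▸ hx).2

lemma exists_forall_crossing_margin_pos (N : ℕ) (ht0 : 0 < t) (ht1 : t < 1) :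
    ∃ δ₀, 0 < δ₀ ∧ δ₀ < 1 ∧ ∀ δ, δ₀ < δ → δ < 1 →
      ∀ m < N, t * (1 - δ) < δ * margin N m t (crossing N m t) := by
  have hev : ∀ᶠ δ in nhdsWithin (1 : ℝ) (Set.Iio 1),
      ∀ m ∈ range N, t * (1 - δ) < δ * margin N m t (crossing N m t) :=
    (Filter.eventually_all_finset _).2 fun m hm => nhdsWithin_le_nhds <|
      ContinuousAt.eventually_lt (by fun_prop) (by fun_prop)
        (by simpa using margin_crossing_pos (mem_range.1 hm) ht0 ht1)
  obtain ⟨l, hl, hsub⟩ := mem_nhdsLT_iff_exists_Ioo_subset.1 hev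
  exact ⟨max l (1 / 2), by positivity, max_lt hl (by norm_num), fun δ hδ hδ1 m hm =>
    hsub ⟨(le_max_left _ _).trans_lt hδ, hδ1⟩ m (mem_range.2 hm)⟩

end

lemma lt_Delta_iff {n k : ℕ} {t ε δ : ℝ} (hδ : δ < 1) (hε : ε ∈ Set.Ioo 0 1) :
    t < Delta n k ε δ ↔ t * (1 - δ) < δ * margin (n - 1) (n - k - 1) t ε := by
  have hS0 := lowerTail_nonneg (N := n - 1) (m := n - k - 1) hε.1.le hε.2.le
  have hS1 := lowerTail_le_one (N := n - 1) (m := n - k - 1) (by omega) hε.1.le hε.2.le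
  have hden : 0 < 1 - δ * lowerTail (n - 1) (n - k - 1) ε := by
    rcases le_or_gt 0 δ with h | h <;> nlinarith
  rw [Delta, ← lowerTail, lt_div_iff₀ hden, margin]
  constructor <;> intro h <;> linarith

lemma setOf_lt_Delta_eq_band {n k : ℕ} {t δ : ℝ} (hδ : δ < 1) :
    {ε : ℝ | ε ∈ Set.Ioo (0 : ℝ) 1 ∧ Delta n k ε δ > t} = band (n - 1) (n - k - 1) t δ :=
  Set.ext fun _ => and_congr_right (lt_Delta_iff hδ)

lemma one_sub_div_mem_Ioo {n : ℕ} {b c : ℝ} (hn : 1 < n) (hb0 : 0 < b / n) (hbc : b / n < c)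
    (hcb : c < b) : 1 - n * (b - c) / (((n : ℝ) - 1) * b) ∈ Set.Ioo 0 1 := by
  have hn' : (1 : ℝ) < n := by exact_mod_cast hn
  have hb : 0 < b := by simpa [div_pos_iff, (by linarith : (0 : ℝ) < n)] using hb0
  rw [div_lt_iff₀ (by linarith)] at hbc
  have hden : 0 < ((n : ℝ) - 1) * b := by nlinarith
  refine ⟨?_, sub_lt_self _ (div_pos (by nlinarith) hden)⟩
  rw [sub_pos, div_lt_one hden]
  nlinarith

/-- Let `t = 1 − n(b−c)/((n−1)b) ∈ (0,1)`.  There exists `δ₀ ∈ (0,1)` such that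
for all `δ ∈ (δ₀,1)`: for every `k ∈ {1,…,n−1}` the set
`B_k(δ) = {ε ∈ (0,1) : Δ(ε;k,δ) > t}` is a nonempty open interval
`(ε̲_k, ε̄_k)`, with `0 = ε̲_{n−1} < ε̲_{n−2} < ⋯ < ε̲_1` and
`0 < ε̄_{n−1} < ε̄_{n−2} < ⋯ < ε̄_1 < 1`: both endpoints of the stability band
strictly increase as tolerance increases (as `k` decreases), and the lower
endpoint is `0` only for the least tolerant strategy `T_{n−1}`. -/
theorem stability_bands_ordered (n : ℕ) (hn : 3 ≤ n) (b c : ℝ)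
    (hb0 : 0 < b / n) (hbc : b / n < c) (hcb : c < b) :
    (0 < 1 - n * (b - c) / (((n : ℝ) - 1) * b) ∧
      1 - n * (b - c) / (((n : ℝ) - 1) * b) < 1) ∧
    ∃ δ₀ : ℝ, 0 < δ₀ ∧ δ₀ < 1 ∧
      ∀ δ : ℝ, δ₀ < δ → δ < 1 →
        ∃ εlo εhi : ℕ → ℝ,
          (∀ k : ℕ, 1 ≤ k → k ≤ n - 1 →
            εlo k < εhi k ∧
            {ε : ℝ | ε ∈ Set.Ioo (0 : ℝ) 1 ∧
                Delta n k ε δ > 1 - n * (b - c) / (((n : ℝ) - 1) * b)} =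
              Set.Ioo (εlo k) (εhi k)) ∧
          εlo (n - 1) = 0 ∧
          (∀ k : ℕ, 1 ≤ k → k ≤ n - 2 → εlo (k + 1) < εlo k) ∧
          0 < εhi (n - 1) ∧
          (∀ k : ℕ, 1 ≤ k → k ≤ n - 2 → εhi (k + 1) < εhi k) ∧
          εhi 1 < 1 := by
  obtain ⟨ht0, ht1⟩ := one_sub_div_mem_Ioo (by omega) hb0 hbc hcb
  refine ⟨⟨ht0, ht1⟩, ?_⟩
  set t := 1 - n * (b - c) / (((n : ℝ) - 1) * b)
  obtain ⟨δ₀, hδ₀, hδ₀1, hcross⟩ := exists_forall_crossing_margin_pos (n - 1) ht0 ht1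
  refine ⟨δ₀, hδ₀, hδ₀1, fun δ hδ hδ1 => ?_⟩
  have hδ0 : 0 < δ := hδ₀.trans hδ
  have hc := hcross δ hδ hδ1
  have hmem : ∀ m < n - 1, crossing (n - 1) m t ∈ band (n - 1) m t δ :=
    fun m hm => crossing_mem_band hm ht0 ht1 (hc m hm)
  have hB : ∀ m < n - 1, band (n - 1) m t δ =
      Set.Ioo (sInf (band (n - 1) m t δ)) (sSup (band (n - 1) m t δ)) :=
    fun m hm => band_eq_Ioo hm.le ht0.le ht1.le hδ0.le ⟨_, hmem m hm⟩
  refine ⟨fun k => sInf (band (n - 1) (n - k - 1) t δ),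
    fun k => sSup (band (n - 1) (n - k - 1) t δ),
    fun k hk1 hkn => ?_, ?_, fun k hk1 hkn => ?_, ?_, fun k hk1 hkn => ?_, ?_⟩ <;> beta_reduce
  · have hm : n - k - 1 < n - 1 := by omega
    exact ⟨Set.nonempty_Ioo.1 (hB _ hm ▸ ⟨_, hmem _ hm⟩),
      (setOf_lt_Delta_eq_band hδ1).trans (hB _ hm)⟩
  · rw [show n - (n - 1) - 1 = 0 by omega]
    exact sInf_band_eq_zero (by omega) ht0 ht1 hδ0 (hc 0 (by omega))
  · rw [show n - k - 1 = n - (k + 1) - 1 + 1 by omega]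
    exact sInf_band_lt_sInf_band_succ (by omega) ht0 ht1 hδ0 hδ1 (hc _ (by omega))
  · rw [show n - (n - 1) - 1 = 0 by omega]
    exact (crossing_pos ht1).trans (hB 0 (by omega) ▸ hmem 0 (by omega)).2
  · rw [show n - k - 1 = n - (k + 1) - 1 + 1 by omega]
    exact sSup_band_lt_sSup_band_succ (by omega) ht0 ht1 hδ0 (hc _ (by omega))
  · exact sSup_band_lt_one (by omega) ht0 ⟨_, hmem _ (by omega)⟩
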